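/- Let (X,d,A) be a metric pair and p ∈ [1,∞]. Then W_p[d] = W_p[d_p] on D(X,A), where d_p(x,x') := min(d(x,x'), ‖(d(x,A), d(x',A))‖_p) is the p-strengthening of d with respect to A. Moreover, for the canonical map ι: X → D(X,A), W_p[d](ι(x), ι(y)) = d_p(x,y) for all x,y ∈ X. -/

import Mathlib

open scoped ENNReal
open Finsupp

/-- The `ℓᵖ` norm of a finite multiset of values in `[0,∞]`, for `p ∈ [1,∞]`. -/
noncomputable def lpNorm (p : ℝ≥0∞) (s : Multiset ℝ≥0∞) : ℝ≥0∞ :=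
  if p = ∞ then s.sup else (s.map (fun x => x ^ p.toReal)).sum ^ (1 / p.toReal)

/-- The `ℓᵖ` norm of a pair of values in `[0,∞]`. -/
noncomputable def lpPair (p : ℝ≥0∞) (a b : ℝ≥0∞) : ℝ≥0∞ := lpNorm p {a, b}

/-- A formal sum is supported in `A`. -/
def SuppIn {X : Type*} (A : Set X) (α : X →₀ ℕ) : Prop := ↑α.support ⊆ A

/-- Equality modulo `D(A)`: `α = β (mod D(A))`. -/
def DRel {X : Type*} (A : Set X) (α β : X →₀ ℕ) : Prop :=
  ∃ a b : X →₀ ℕ, SuppIn A a ∧ SuppIn A b ∧ α + a = β + b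

/-- `σ ∈ D(X × X)` is a matching between `α` and `β` (mod `D(A)`). -/
noncomputable def IsMatching {X : Type*} (A : Set X) (σ : X × X →₀ ℕ) (α β : X →₀ ℕ) : Prop :=
  DRel A (Finsupp.mapDomain Prod.fst σ) α ∧ DRel A (Finsupp.mapDomain Prod.snd σ) β

/-- The `p`-cost of a matching `σ` with respect to `d`. -/
noncomputable def matchCost {X : Type*} (d : X → X → ℝ≥0∞) (p : ℝ≥0∞) (σ : X × X →₀ ℕ) : ℝ≥0∞ :=
  lpNorm p (σ.toMultiset.map (fun z => d z.1 z.2))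

/-- The `p`-Wasserstein distance between persistence diagrams on `(X, d, A)`,
computed on representatives in the free commutative monoid `D(X) = (X →₀ ℕ)`. -/
noncomputable def Wp {X : Type*} (d : X → X → ℝ≥0∞) (A : Set X) (p : ℝ≥0∞)
    (α β : X →₀ ℕ) : ℝ≥0∞ :=
  ⨅ σ : {σ : X × X →₀ ℕ // IsMatching A σ α β}, matchCost d p σ.1

/-- Distance from a point to the subset `A` (infimum of distances, `∞` if `A = ∅`). -/
noncomputable def distToSet {X : Type*} (d : X → X → ℝ≥0∞) (A : Set X) (x : X) : ℝ≥0∞ :=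
  ⨅ a ∈ A, d x a

/-- The `p`-strengthening of `d` with respect to `A`:
`d_p(x,x') = min(d(x,x'), ‖(d(x,A), d(x',A))‖_p)`. -/
noncomputable def pStrengthening {X : Type*} (d : X → X → ℝ≥0∞) (A : Set X) (p : ℝ≥0∞)
    (x x' : X) : ℝ≥0∞ :=
  min (d x x') (lpPair p (distToSet d A x) (distToSet d A x'))

/-! Since `d_p ≤ d`, only `W_p[d] ≤ W_p[d_p]` needs an argument. A pair `(x, y)` of a matching
whose `d_p`-cost is `‖(d(x,A), d(y,A))‖_p` can be replaced by the two pairs `(x, a)` and `(b, y)`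
with `a, b ∈ A`, which is still a matching modulo `D(A)`. The `ℓᵖ` norm is monotone and
continuous in each entry, so taking the infimum over `a, b ∈ A` turns the `d`-cost of the new
matching into the `d_p`-cost of the old one.

For `ι x` and `ι y`, the single pair `(x, y)` costs `d_p(x, y)`. Any other matching either contains
`(x, y)`, or matches each of `x`, `y` that lies outside `A` with a point of `A`, so its cost is at
least `‖(d(x,A), d(y,A))‖_p`. -/

section LpNorm

variable {p : ℝ≥0∞}

lemma monotone_lpNorm_cons (s : Multiset ℝ≥0∞) : Monotone fun a => lpNorm p (a ::ₘ s) := by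
  intro a b hab
  unfold lpNorm
  split_ifs
  · simp only [Multiset.sup_cons]; gcongr
  · simp only [Multiset.map_cons, Multiset.sum_cons]; gcongr

lemma continuous_lpNorm_cons (s : Multiset ℝ≥0∞) : Continuous fun a => lpNorm p (a ::ₘ s) := by
  unfold lpNorm
  split_ifs
  · simp only [Multiset.sup_cons]; fun_prop
  · simp only [Multiset.map_cons, Multiset.sum_cons]
    exact ENNReal.continuous_rpow_const.comp (ENNReal.continuous_rpow_const.add continuous_const)

lemma le_lpNorm (hp : p ≠ 0) {s : Multiset ℝ≥0∞} {a : ℝ≥0∞} (h : a ∈ s) : a ≤ lpNorm p s := by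
  unfold lpNorm
  split_ifs with htop
  · exact Multiset.le_sup h
  · have ht := ENNReal.toReal_pos hp htop
    calc a = (a ^ p.toReal) ^ (1 / p.toReal) := by rw [one_div, ENNReal.rpow_rpow_inv ht.ne']
      _ ≤ _ := by
        gcongr
        exact Multiset.le_sum_of_mem (Multiset.mem_map_of_mem (fun x : ℝ≥0∞ => x ^ p.toReal) h)

lemma lpNorm_mono {s t : Multiset ℝ≥0∞} (h : s ≤ t) : lpNorm p s ≤ lpNorm p t := by
  unfold lpNorm
  split_ifs
  · exact Multiset.sup_mono (Multiset.subset_of_le h)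
  · obtain ⟨u, rfl⟩ := Multiset.le_iff_exists_add.1 h
    gcongr
    rw [Multiset.map_add, Multiset.sum_add]
    exact le_self_add

lemma lpNorm_map_mono {ι : Type*} {f g : ι → ℝ≥0∞} (h : ∀ i, f i ≤ g i) (s : Multiset ι) :
    lpNorm p (s.map f) ≤ lpNorm p (s.map g) := by
  unfold lpNorm
  split_ifs
  · exact Multiset.sup_le.2 fun b hb => by
      obtain ⟨i, hi, rfl⟩ := Multiset.mem_map.1 hb
      exact (h i).trans (Multiset.le_sup (Multiset.mem_map_of_mem g hi))
  · simp only [Multiset.map_map]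
    gcongr
    exact Multiset.sum_map_le_sum_map _ _ fun i _ =>
      ENNReal.rpow_le_rpow (h i) ENNReal.toReal_nonneg

lemma lpNorm_singleton (hp : p ≠ 0) (a : ℝ≥0∞) : lpNorm p {a} = a := by
  unfold lpNorm
  split_ifs with htop
  · simp
  · simp [ENNReal.rpow_rpow_inv (ENNReal.toReal_pos hp htop).ne']

lemma lpNorm_cons_top (hp : p ≠ 0) (s : Multiset ℝ≥0∞) : lpNorm p (⊤ ::ₘ s) = ⊤ :=
  top_le_iff.1 (le_lpNorm hp (Multiset.mem_cons_self _ _))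

lemma lpNorm_cons_cons (hp : p ≠ 0) (a b : ℝ≥0∞) (s : Multiset ℝ≥0∞) :
    lpNorm p (a ::ₘ b ::ₘ s) = lpNorm p (lpPair p a b ::ₘ s) := by
  unfold lpPair lpNorm
  split_ifs with htop
  · simp [sup_assoc]
  · simp [ENNReal.rpow_inv_rpow (ENNReal.toReal_pos hp htop).ne', add_assoc]

lemma lpNorm_cons_min (a b : ℝ≥0∞) (s : Multiset ℝ≥0∞) :
    lpNorm p (min a b ::ₘ s) = min (lpNorm p (a ::ₘ s)) (lpNorm p (b ::ₘ s)) :=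
  (monotone_lpNorm_cons s).map_min

lemma le_lpNorm_cons_iInf_iff (hp : p ≠ 0) {ι : Sort*} (f : ι → ℝ≥0∞) (s : Multiset ℝ≥0∞)
    (c : ℝ≥0∞) : c ≤ lpNorm p ((⨅ i, f i) ::ₘ s) ↔ ∀ i, c ≤ lpNorm p (f i ::ₘ s) := by
  rw [(monotone_lpNorm_cons s).map_iInf_of_continuousAt (continuous_lpNorm_cons s).continuousAt
    (lpNorm_cons_top hp s)]
  exact le_iInf_iff

lemma lpNorm_cons_zero (hp : p ≠ 0) (s : Multiset ℝ≥0∞) : lpNorm p (0 ::ₘ s) = lpNorm p s := by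
  unfold lpNorm
  split_ifs with htop
  · simp
  · simp [ENNReal.zero_rpow_of_pos (ENNReal.toReal_pos hp htop)]

lemma lpPair_comm (a b : ℝ≥0∞) : lpPair p a b = lpPair p b a := by
  rw [lpPair, lpPair, Multiset.pair_comm]

lemma lpPair_zero_left (hp : p ≠ 0) (b : ℝ≥0∞) : lpPair p 0 b = b := by
  rw [lpPair, Multiset.insert_eq_cons, lpNorm_cons_zero hp, lpNorm_singleton hp]

lemma lpPair_zero_right (hp : p ≠ 0) (a : ℝ≥0∞) : lpPair p a 0 = a := by
  rw [lpPair_comm, lpPair_zero_left hp]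

lemma lpPair_mono {a a' b b' : ℝ≥0∞} (ha : a ≤ a') (hb : b ≤ b') :
    lpPair p a b ≤ lpPair p a' b' :=
  calc lpPair p a b ≤ lpPair p a' b := monotone_lpNorm_cons _ ha
    _ = lpPair p b a' := lpPair_comm _ _
    _ ≤ lpPair p b' a' := monotone_lpNorm_cons _ hb
    _ = lpPair p a' b' := lpPair_comm _ _

lemma lpPair_le_lpNorm_map {ι : Type*} {f : ι → ℝ≥0∞} {s : Multiset ι} {i j : ι} (hij : i ≠ j)
    (hi : i ∈ s) (hj : j ∈ s) : lpPair p (f i) (f j) ≤ lpNorm p (s.map f) := by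
  classical
  have hle : ({i, j} : Multiset ι) ≤ s :=
    (Multiset.le_iff_subset (by simpa using hij)).2
      (by simp [Multiset.insert_eq_cons, Multiset.cons_subset, hi, hj])
  simpa [lpPair] using lpNorm_mono (p := p) (Multiset.map_le_map (f := f) hle)

end LpNorm

section Matching

variable {X : Type*} {A : Set X}

lemma Multiset.toFinsupp_cons [DecidableEq X] (x : X) (s : Multiset X) :
    Multiset.toFinsupp (x ::ₘ s) = Finsupp.single x 1 + Multiset.toFinsupp s := by
  rw [← Multiset.singleton_add, Multiset.toFinsupp_add, Multiset.toFinsupp_singleton]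

lemma SuppIn.single {x : X} (hx : x ∈ A) : SuppIn A (Finsupp.single x 1) :=
  fun _ hu => Finset.mem_singleton.1 (Finsupp.support_single_subset hu) ▸ hx

lemma DRel.refl (γ : X →₀ ℕ) : DRel A γ γ :=
  ⟨0, 0, by simp [SuppIn], by simp [SuppIn], rfl⟩

lemma DRel.add_left {γ δ c : X →₀ ℕ} (h : DRel A γ δ) (hc : SuppIn A c) : DRel A (c + γ) δ := by
  classical
  obtain ⟨a, b, ha, hb, hab⟩ := h
  refine ⟨a, b + c, ha, fun u hu => ?_, ?_⟩
  · rcases Finset.mem_union.1 (Finsupp.support_add hu) with h | h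
    exacts [hb h, hc h]
  · rw [add_assoc, hab]; abel

lemma DRel.apply_eq {γ δ : X →₀ ℕ} (h : DRel A γ δ) {u : X} (hu : u ∉ A) : γ u = δ u := by
  obtain ⟨a, b, ha, hb, hab⟩ := h
  have ha0 : a u = 0 := Finsupp.notMem_support_iff.1 fun h => hu (ha h)
  have hb0 : b u = 0 := Finsupp.notMem_support_iff.1 fun h => hu (hb h)
  simpa [ha0, hb0] using DFunLike.congr_fun hab u

lemma DRel.mem_map_iff {ι : Type*} {f : ι → X} {σ : ι →₀ ℕ} {γ : X →₀ ℕ}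
    (h : DRel A (σ.mapDomain f) γ) {u : X} (hu : u ∉ A) :
    u ∈ σ.toMultiset.map f ↔ γ u ≠ 0 := by
  classical
  rw [← h.apply_eq hu, ← Multiset.count_ne_zero, Finsupp.toMultiset_map,
    Finsupp.count_toMultiset]

lemma DRel.exists_partner_mem {ι : Type*} {f g : ι → X} {σ : ι →₀ ℕ} {x y : X}
    (hf : DRel A (σ.mapDomain f) (Finsupp.single x 1))
    (hg : DRel A (σ.mapDomain g) (Finsupp.single y 1)) (hx : x ∉ A)
    (hxy : ∀ i ∈ σ.toMultiset, f i = x → g i ≠ y) :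
    ∃ i ∈ σ.toMultiset, f i = x ∧ g i ∈ A := by
  obtain ⟨i, hi, rfl⟩ := Multiset.mem_map.1 ((hf.mem_map_iff hx).2 (by simp))
  refine ⟨i, hi, rfl, by_contra fun hgi => hxy i hi rfl ?_⟩
  have := (hg.mem_map_iff hgi).1 (Multiset.mem_map_of_mem g hi)
  exact (Finsupp.single_apply_ne_zero.1 this).1

lemma IsMatching.reroute {σ : X × X →₀ ℕ} {α β : X →₀ ℕ} {x y a b : X}
    (h : IsMatching A (Finsupp.single (x, y) 1 + σ) α β) (ha : a ∈ A) (hb : b ∈ A) :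
    IsMatching A (Finsupp.single (x, a) 1 + Finsupp.single (b, y) 1 + σ) α β := by
  obtain ⟨h₁, h₂⟩ := h
  simp only [IsMatching, Finsupp.mapDomain_add, Finsupp.mapDomain_single] at h₁ h₂ ⊢
  constructor
  · convert h₁.add_left (SuppIn.single hb) using 1; abel
  · convert h₂.add_left (SuppIn.single ha) using 1; abel

lemma isMatching_single (x y : X) :
    IsMatching A (Finsupp.single (x, y) 1) (Finsupp.single x 1) (Finsupp.single y 1) := by
  simp only [IsMatching, Finsupp.mapDomain_single]
  exact ⟨DRel.refl _, DRel.refl _⟩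

end Matching

section Strengthening

variable {X : Type*} {d : X → X → ℝ≥0∞} {A : Set X} {p : ℝ≥0∞}

lemma distToSet_le {x a : X} (ha : a ∈ A) : distToSet d A x ≤ d x a := iInf₂_le a ha

lemma distToSet_eq_zero (hrefl : ∀ x, d x x = 0) {x : X} (hx : x ∈ A) : distToSet d A x = 0 :=
  nonpos_iff_eq_zero.1 ((distToSet_le hx).trans_eq (hrefl x))

lemma le_lpNorm_distToSet_cons_iff (hp : p ≠ 0) (x : X) (s : Multiset ℝ≥0∞) (c : ℝ≥0∞) :
    c ≤ lpNorm p (distToSet d A x ::ₘ s) ↔ ∀ a ∈ A, c ≤ lpNorm p (d x a ::ₘ s) := by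
  simp only [distToSet, le_lpNorm_cons_iInf_iff hp]

lemma Wp_le_matchCost {α β : X →₀ ℕ} {σ : X × X →₀ ℕ} (hσ : IsMatching A σ α β) :
    Wp d A p α β ≤ matchCost d p σ :=
  iInf_le (fun σ : {σ // IsMatching A σ α β} => matchCost d p σ.1) ⟨σ, hσ⟩

lemma Wp_mono {d' : X → X → ℝ≥0∞} (h : ∀ x y, d' x y ≤ d x y) (α β : X →₀ ℕ) :
    Wp d' A p α β ≤ Wp d A p α β :=
  iInf_mono fun _ => lpNorm_map_mono (fun z : X × X => h z.1 z.2) _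

lemma Wp_le_lpNorm_add_map_pStrengthening [DecidableEq X] (hp : p ≠ 0)
    (hsymm : ∀ x y, d x y = d y x) {α β : X →₀ ℕ} (n : Multiset (X × X)) :
    ∀ m : Multiset (X × X), IsMatching A (Multiset.toFinsupp (m + n)) α β →
      Wp d A p α β ≤
        lpNorm p (m.map (fun z => d z.1 z.2) + n.map (fun z => pStrengthening d A p z.1 z.2)) := by
  induction n using Multiset.induction with
  | empty =>
    intro m hm
    simpa [matchCost] using Wp_le_matchCost (d := d) (p := p) hm
  | cons z n ih =>
    obtain ⟨x, y⟩ := z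
    intro m hm
    rw [Multiset.add_cons, Multiset.toFinsupp_cons] at hm
    rw [Multiset.map_cons, Multiset.add_cons, pStrengthening, lpNorm_cons_min,
      ← lpNorm_cons_cons hp]
    refine le_min ?_ ?_
    · simpa using ih ((x, y) ::ₘ m) (by rwa [Multiset.cons_add, Multiset.toFinsupp_cons])
    · refine (le_lpNorm_distToSet_cons_iff hp _ _ _).2 fun a ha => ?_
      rw [Multiset.cons_swap]
      refine (le_lpNorm_distToSet_cons_iff hp _ _ _).2 fun b hb => ?_
      have hrerouted := ih ((x, a) ::ₘ (b, y) ::ₘ m) (by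
        rw [Multiset.cons_add, Multiset.cons_add, Multiset.toFinsupp_cons, Multiset.toFinsupp_cons,
          ← add_assoc]
        exact hm.reroute ha hb)
      simpa [hsymm b y, Multiset.cons_swap] using hrerouted

lemma Wp_le_matchCost_pStrengthening (hp : p ≠ 0) (hsymm : ∀ x y, d x y = d y x)
    {α β : X →₀ ℕ} {σ : X × X →₀ ℕ} (hσ : IsMatching A σ α β) :
    Wp d A p α β ≤ matchCost (pStrengthening d A p) p σ := by
  classical
  simpa [matchCost] using
    Wp_le_lpNorm_add_map_pStrengthening hp hsymm σ.toMultiset 0 (by simpa using hσ)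

lemma pStrengthening_le_matchCost (hp : p ≠ 0) (hrefl : ∀ x, d x x = 0)
    (hsymm : ∀ x y, d x y = d y x) {x y : X} {σ : X × X →₀ ℕ}
    (hσ : IsMatching A σ (Finsupp.single x 1) (Finsupp.single y 1)) :
    pStrengthening d A p x y ≤ matchCost d p σ := by
  set F := σ.toMultiset
  by_cases hxy : (x, y) ∈ F
  · exact (min_le_left _ _).trans (le_lpNorm hp (Multiset.mem_map_of_mem _ hxy))
  have hx : x ∉ A → ∃ z ∈ F, z.1 = x ∧ z.2 ∈ A := fun hx =>
    hσ.1.exists_partner_mem hσ.2 hx fun z hz h₁ h₂ => hxy ((Prod.ext h₁ h₂ : z = (x, y)) ▸ hz)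
  have hy : y ∉ A → ∃ w ∈ F, w.2 = y ∧ w.1 ∈ A := fun hy =>
    hσ.2.exists_partner_mem hσ.1 hy fun w hw h₂ h₁ => hxy ((Prod.ext h₁ h₂ : w = (x, y)) ▸ hw)
  refine (min_le_right _ _).trans ?_
  by_cases hxA : x ∈ A <;> by_cases hyA : y ∈ A
  · rw [distToSet_eq_zero hrefl hxA, distToSet_eq_zero hrefl hyA, lpPair_zero_left hp]
    exact zero_le
  · obtain ⟨w, hw, rfl, hw₁⟩ := hy hyA
    rw [distToSet_eq_zero hrefl hxA, lpPair_zero_left hp]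
    exact ((distToSet_le hw₁).trans_eq (hsymm _ _)).trans
      (le_lpNorm hp (Multiset.mem_map_of_mem _ hw))
  · obtain ⟨z, hz, rfl, hz₂⟩ := hx hxA
    rw [distToSet_eq_zero hrefl hyA, lpPair_zero_right hp]
    exact (distToSet_le hz₂).trans (le_lpNorm hp (Multiset.mem_map_of_mem _ hz))
  · obtain ⟨z, hz, rfl, hz₂⟩ := hx hxA
    obtain ⟨w, hw, rfl, hw₁⟩ := hy hyA
    have hzw : z ≠ w := fun h => hxA (h ▸ hw₁)
    calc lpPair p (distToSet d A z.1) (distToSet d A w.2)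
        ≤ lpPair p (d z.1 z.2) (d w.1 w.2) :=
          lpPair_mono (distToSet_le hz₂) ((distToSet_le hw₁).trans_eq (hsymm _ _))
      _ ≤ _ := lpPair_le_lpNorm_map hzw hz hw

lemma matchCost_single (hp : p ≠ 0) (x y : X) :
    matchCost d p (Finsupp.single (x, y) 1) = d x y := by
  rw [matchCost, Finsupp.toMultiset_single, one_nsmul, Multiset.map_singleton, lpNorm_singleton hp]

end Strengthening

theorem wasserstein_p_strengthening_general {X : Type*}
    (d : X → X → ℝ≥0∞)
    (hrefl : ∀ x, d x x = 0)
    (hsymm : ∀ x y, d x y = d y x)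
    (A : Set X) (p : ℝ≥0∞) (hp : 1 ≤ p) :
    (∀ α β : X →₀ ℕ, Wp d A p α β = Wp (pStrengthening d A p) A p α β) ∧
    (∀ x y : X,
      Wp d A p (Finsupp.single x 1) (Finsupp.single y 1) = pStrengthening d A p x y) := by
  have hp₀ : p ≠ 0 := (one_pos.trans_le hp).ne'
  refine ⟨fun α β => le_antisymm ?_ ?_, fun x y => le_antisymm ?_ ?_⟩
  · exact le_iInf fun σ => Wp_le_matchCost_pStrengthening hp₀ hsymm σ.2
  · exact Wp_mono (fun x y => min_le_left _ _) α β
  · calc Wp d A p (Finsupp.single x 1) (Finsupp.single y 1)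
        ≤ matchCost (pStrengthening d A p) p (Finsupp.single (x, y) 1) :=
          Wp_le_matchCost_pStrengthening hp₀ hsymm (isMatching_single x y)
      _ = pStrengthening d A p x y := matchCost_single hp₀ x y
  · exact le_iInf fun σ => pStrengthening_le_matchCost hp₀ hrefl hsymm σ.2

/-- `W_p[d] = W_p[d_p]` on `D(X,A)`, where `d_p` is the
`p`-strengthening of `d` with respect to `A`; moreover, for the canonical map
`ι : X → D(X,A)`, `W_p[d](ι x, ι y) = d_p(x,y)`. -/
theorem wasserstein_p_strengthening {X : Type*}
    (d : X → X → ℝ≥0∞)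
    (hrefl : ∀ x, d x x = 0)
    (hsymm : ∀ x y, d x y = d y x)
    (htri : ∀ x y z, d x y ≤ d x z + d z y)
    (A : Set X) (p : ℝ≥0∞) (hp : 1 ≤ p) :
    (∀ α β : X →₀ ℕ, Wp d A p α β = Wp (pStrengthening d A p) A p α β) ∧
    (∀ x y : X,
      Wp d A p (Finsupp.single x 1) (Finsupp.single y 1) = pStrengthening d A p x y) :=
  wasserstein_p_strengthening_general d hrefl hsymm A p hp
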